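/- In the quotient ring 𝔽₅[A]/(A^{10} − 1), the element P(A) = 3A⁸ + 3A⁶ + 2A⁴ + 3 (the reduction mod 5 of 2(4A⁶ + 4 + A⁴ + A⁸)) satisfies P(A) ≠ P(A⁹); i.e. the Yamada polynomial of the given embedding of the Petersen graph violates the symmetry criterion, so that embedding is not 5-periodic. -/
import Mathlib


open Polynomial

theorem stmt_6 :
    Ideal.Quotient.mk (Ideal.span {(X : (ZMod 5)[X]) ^ 10 - 1})
        (3 * X ^ 8 + 3 * X ^ 6 + 2 * X ^ 4 + 3) ≠
      Ideal.Quotient.mk (Ideal.span {(X : (ZMod 5)[X]) ^ 10 - 1})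
        ((3 * X ^ 8 + 3 * X ^ 6 + 2 * X ^ 4 + 3 : (ZMod 5)[X]).comp (X ^ 9)) := by
  intro h
  rw [Ideal.Quotient.eq, Ideal.mem_span_singleton] at h
  set q : (ZMod 5)[X] :=
    -(3*X^62 + 3*X^52 + 3*X^44 + 3*X^42 + 3*X^34 + 3*X^32 + 2*X^26 + 3*X^24 + 3*X^22
      + 2*X^16 + 3*X^14 + 3*X^12 + 2*X^6 + 3*X^4 + 3*X^2) with hq
  set r : (ZMod 5)[X] := 3*X^8 + X^6 - X^4 - 3*X^2 with hr
  have hcomp : ((3 * X ^ 8 + 3 * X ^ 6 + 2 * X ^ 4 + 3 : (ZMod 5)[X]).comp (X ^ 9))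
      = 3*X^72 + 3*X^54 + 2*X^36 + 3 := by
    simp only [add_comp, mul_comp, pow_comp, X_comp, ofNat_comp, natCast_comp]
    ring
  have hdecomp : (3 * X ^ 8 + 3 * X ^ 6 + 2 * X ^ 4 + 3 : (ZMod 5)[X])
      - (3 * X ^ 8 + 3 * X ^ 6 + 2 * X ^ 4 + 3 : (ZMod 5)[X]).comp (X ^ 9)
      = q * ((X : (ZMod 5)[X])^10 - 1) + r := by
    rw [hcomp, hq, hr]; ring
  rw [hdecomp] at h
  have hdvdr : ((X : (ZMod 5)[X])^10 - 1) ∣ r :=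
    (dvd_add_right ⟨q, (mul_comm q _)⟩).mp h
  have hrz : (r : (ZMod 5)[X]) = 0 := by
    haveI : Fact (Nat.Prime 5) := ⟨by norm_num⟩
    refine Polynomial.eq_zero_of_dvd_of_degree_lt hdvdr ?_
    have h10 : ((X : (ZMod 5)[X])^10 - 1).degree = 10 := by
      have : ((X : (ZMod 5)[X])^10 - C 1).degree = 10 := degree_X_pow_sub_C (by norm_num) 1
      simpa using this
    rw [h10]
    have : (r : (ZMod 5)[X]).degree ≤ 8 := by
      rw [hr]; compute_degree
    exact lt_of_le_of_lt this (by norm_num)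
  rw [hr] at hrz
  have h2 : ((3*X^8 + X^6 - X^4 - 3*X^2 : (ZMod 5)[X])).coeff 2 = -3 := by
    simp [coeff_X_pow]
  rw [hrz] at h2
  simp at h2
  exact absurd h2 (by decide)
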